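/- arXiv:2007.10852 — 4 statements merged into one kernel-verified Lean document; each statement's English description precedes it below -/
import Mathlib

section
/- Let X be a g-complete topological space, where g : X × X → ℝ is a continuous function such that for all x, y, z ∈ X: g(x,y) = 0 if and only if x = y, |g(x,y)| = |g(y,x)|, and |g(x,z)| ≤ |g(x,y)| + |g(y,z)|. Let (A, B) be a pair of nonempty subsets of X such that A_g is nonempty and g-closed. Let T : A → B be a topologically proximal weak contraction with respect to g with constants β ∈ (0,1) and N ≥ 0, such that T(A_g) ⊆ B_g. Then T has a best proximity point p* ∈ A_g; moreover, every sequence (p_n) with p₀ ∈ A_g and |g(p_{n+1}, T(p_n))| = D_g(A,B) for all n ≥ 0 g-converges to a best proximity point of T. -/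
/-!
The hypotheses say exactly that `|g|` is a metric on `X`, and `g`-convergence, `g`-Cauchy
sequences and `g`-completeness are the usual metric notions for it. Along a proximal sequence
`p`, the contraction inequality with `x₂ = u₁ = p (n + 1)` kills the `N`-term, so consecutive
distances shrink by the factor `β` and `p` is Cauchy. Its limit `q` lies in `A_g`, hence `T q`
has a proximal partner `u`; applying the contraction inequality to the pairs `(p n, p (n + 1))`
and `(q, u)` shows that `p (n + 1)` converges to `u` as well, so `u = q`.
-/

open Filter Topology

/-- A sequence `x` in `X` `g`-converges to `p` if `|g (x n) p| → 0`. -/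
def GConv {X : Type*} (g : X → X → ℝ) (x : ℕ → X) (p : X) : Prop :=
  Tendsto (fun n => |g (x n) p|) atTop (𝓝 0)

/-- A sequence `x` in `X` is `g`-Cauchy if `|g (x n) (x m)| → 0` as `n, m → ∞`. -/
def GCauchy {X : Type*} (g : X → X → ℝ) (x : ℕ → X) : Prop :=
  ∀ ε > (0 : ℝ), ∃ k : ℕ, ∀ n ≥ k, ∀ m ≥ k, |g (x n) (x m)| < ε

/-- `X` is `g`-complete if every `g`-Cauchy sequence `g`-converges to some point of `X`. -/
def GComplete {X : Type*} (g : X → X → ℝ) : Prop :=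
  ∀ x : ℕ → X, GCauchy g x → ∃ p : X, GConv g x p

/-- `D_g(A,B) = inf {|g x y| : x ∈ A, y ∈ B}`. -/
noncomputable def Dg {X : Type*} (g : X → X → ℝ) (A B : Set X) : ℝ :=
  sInf {r : ℝ | ∃ x ∈ A, ∃ y ∈ B, r = |g x y|}

/-- `A_g = {x ∈ A : |g x y| = D_g(A,B) for some y ∈ B}`. -/
noncomputable def proxA {X : Type*} (g : X → X → ℝ) (A B : Set X) : Set X :=
  {x ∈ A | ∃ y ∈ B, |g x y| = Dg g A B}

/-- `B_g = {y ∈ B : |g x y| = D_g(A,B) for some x ∈ A}`. -/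
noncomputable def proxB {X : Type*} (g : X → X → ℝ) (A B : Set X) : Set X :=
  {y ∈ B | ∃ x ∈ A, |g x y| = Dg g A B}

/-- A subset `S` of `X` is `g`-closed if every sequence in `S` which `g`-converges
to a point of `X` has its limit in `S`. -/
def GClosed {X : Type*} (g : X → X → ℝ) (S : Set X) : Prop :=
  ∀ x : ℕ → X, (∀ n, x n ∈ S) → ∀ p : X, GConv g x p → p ∈ S

/-- `f : A → B` is a topologically proximal weak contraction with respect to `g`
with constants `β` and `N`. -/
def TopProxWeakContraction {X : Type*} (g : X → X → ℝ) (A B : Set X) (f : X → X)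
    (β N : ℝ) : Prop :=
  ∀ x₁ ∈ A, ∀ x₂ ∈ A, ∀ u₁ ∈ A, ∀ u₂ ∈ A,
    |g u₁ (f x₁)| = Dg g A B → |g u₂ (f x₂)| = Dg g A B →
    |g u₁ u₂| ≤ β * |g x₁ x₂| + N * |g x₂ u₁|

structure IsGMetric {X : Type*} (g : X → X → ℝ) : Prop where
  eq_zero_iff : ∀ x y, g x y = 0 ↔ x = y
  abs_comm : ∀ x y, |g x y| = |g y x|
  abs_triangle : ∀ x y z, |g x z| ≤ |g x y| + |g y z|

namespace IsGMetric

variable {X : Type*} {g : X → X → ℝ}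

theorem self_eq_zero (hg : IsGMetric g) (x : X) : g x x = 0 :=
  (hg.eq_zero_iff x x).2 rfl

abbrev toMetricSpace (hg : IsGMetric g) : MetricSpace X where
  dist x y := |g x y|
  dist_self x := by simp [hg.self_eq_zero x]
  dist_comm := hg.abs_comm
  dist_triangle := hg.abs_triangle
  eq_of_dist_eq_zero h := (hg.eq_zero_iff _ _).1 (abs_eq_zero.1 h)

theorem gCauchy_of_le_geometric (hg : IsGMetric g) {p : ℕ → X} {C r : ℝ} (hr : r < 1)
    (hp : ∀ n, |g (p n) (p (n + 1))| ≤ C * r ^ n) : GCauchy g p := by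
  let := hg.toMetricSpace
  exact Metric.cauchySeq_iff.1 (cauchySeq_of_le_geometric (f := p) r C hr hp)

theorem eq_of_gConv (hg : IsGMetric g) {p : ℕ → X} {q q' : X} (hq : GConv g p q)
    (hq' : GConv g p q') : q = q' := by
  let := hg.toMetricSpace
  exact tendsto_nhds_unique (tendsto_iff_dist_tendsto_zero.2 hq)
    (tendsto_iff_dist_tendsto_zero.2 hq')

variable {A B : Set X} {T : X → X} {β N : ℝ}

theorem abs_succ_le_of_topProxWeakContraction (hg : IsGMetric g)
    (hT : TopProxWeakContraction g A B T β N) {p : ℕ → X} (hpA : ∀ n, p n ∈ A)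
    (hp : ∀ n, |g (p (n + 1)) (T (p n))| = Dg g A B) (n : ℕ) :
    |g (p (n + 1)) (p (n + 2))| ≤ β * |g (p n) (p (n + 1))| := by
  simpa [hg.self_eq_zero] using
    hT _ (hpA n) _ (hpA (n + 1)) _ (hpA (n + 1)) _ (hpA (n + 2)) (hp n) (hp (n + 1))

theorem gCauchy_of_topProxWeakContraction (hg : IsGMetric g) (hβ : 0 ≤ β) (hβ1 : β < 1)
    (hT : TopProxWeakContraction g A B T β N) {p : ℕ → X} (hpA : ∀ n, p n ∈ A)
    (hp : ∀ n, |g (p (n + 1)) (T (p n))| = Dg g A B) : GCauchy g p := by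
  refine hg.gCauchy_of_le_geometric (C := |g (p 0) (p 1)|) hβ1 fun n => ?_
  induction n with
  | zero => simp
  | succ n ih =>
    calc |g (p (n + 1)) (p (n + 2))| ≤ β * |g (p n) (p (n + 1))| :=
          hg.abs_succ_le_of_topProxWeakContraction hT hpA hp n
      _ ≤ β * (|g (p 0) (p 1)| * β ^ n) := mul_le_mul_of_nonneg_left ih hβ
      _ = |g (p 0) (p 1)| * β ^ (n + 1) := by ring

theorem abs_self_apply_eq_Dg_of_gConv (hg : IsGMetric g)
    (hT : TopProxWeakContraction g A B T β N) {p : ℕ → X} (hpA : ∀ n, p n ∈ A)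
    (hp : ∀ n, |g (p (n + 1)) (T (p n))| = Dg g A B) {q : X} (hq : GConv g p q) (hqA : q ∈ A)
    (hTq : T q ∈ proxB g A B) : |g q (T q)| = Dg g A B := by
  obtain ⟨-, u, huA, hu⟩ := hTq
  have hq_succ : GConv g (fun n => p (n + 1)) q := hq.comp (tendsto_add_atTop_nat 1)
  have hu_succ : GConv g (fun n => p (n + 1)) u := by
    have hbound : Tendsto (fun n => β * |g (p n) q| + N * |g (p (n + 1)) q|) atTop (𝓝 0) := by
      simpa using (hq.const_mul β).add (hq_succ.const_mul N)
    refine squeeze_zero (fun _ => abs_nonneg _) (fun n => ?_) hbound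
    rw [hg.abs_comm (p (n + 1)) q]
    exact hT _ (hpA n) _ hqA _ (hpA (n + 1)) _ huA (hp n) hu
  obtain rfl := hg.eq_of_gConv hq_succ hu_succ
  exact hu

end IsGMetric

theorem exists_proximal_seq {X : Type*} {g : X → X → ℝ} {A B : Set X} {T : X → X}
    (hTprox : Set.MapsTo T (proxA g A B) (proxB g A B)) (hAg : (proxA g A B).Nonempty) :
    ∃ p : ℕ → X, p 0 ∈ proxA g A B ∧
      ∀ n, p (n + 1) ∈ proxA g A B ∧ |g (p (n + 1)) (T (p n))| = Dg g A B := by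
  have hnext : ∀ x : proxA g A B, ∃ y : proxA g A B, |g y (T x)| = Dg g A B := fun x => by
    obtain ⟨hTxB, y, hyA, hy⟩ := hTprox x.2
    exact ⟨⟨y, hyA, T x, hTxB, hy⟩, hy⟩
  choose F hF using hnext
  obtain ⟨x₀, hx₀⟩ := hAg
  refine ⟨fun n => (F^[n] ⟨x₀, hx₀⟩ : X), hx₀, fun n => ⟨(F^[n + 1] _).2, ?_⟩⟩
  simp only [Function.iterate_succ_apply']
  exact hF _

theorem stmt_3_general {X : Type*} [TopologicalSpace X] (g : X → X → ℝ)
    (hzero : ∀ x y : X, g x y = 0 ↔ x = y)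
    (hsymm : ∀ x y : X, |g x y| = |g y x|)
    (htri : ∀ x y z : X, |g x z| ≤ |g x y| + |g y z|)
    (hcomp : GComplete g)
    (A B : Set X)
    (hAg : (proxA g A B).Nonempty) (hAgclosed : GClosed g (proxA g A B))
    (T : X → X)
    (β N : ℝ) (hβ : 0 < β) (hβ1 : β < 1)
    (hT : TopProxWeakContraction g A B T β N)
    (hTprox : Set.MapsTo T (proxA g A B) (proxB g A B)) :
    (∃ p ∈ proxA g A B, |g p (T p)| = Dg g A B) ∧
      ∀ p : ℕ → X, p 0 ∈ proxA g A B →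
        (∀ n : ℕ, p (n + 1) ∈ proxA g A B ∧ |g (p (n + 1)) (T (p n))| = Dg g A B) →
        ∃ q ∈ proxA g A B, |g q (T q)| = Dg g A B ∧ GConv g p q := by
  have hg : IsGMetric g := ⟨hzero, hsymm, htri⟩
  have hconv : ∀ p : ℕ → X, p 0 ∈ proxA g A B →
      (∀ n : ℕ, p (n + 1) ∈ proxA g A B ∧ |g (p (n + 1)) (T (p n))| = Dg g A B) →
      ∃ q ∈ proxA g A B, |g q (T q)| = Dg g A B ∧ GConv g p q := by
    intro p h0 hp
    have hpAg : ∀ n, p n ∈ proxA g A B := fun | 0 => h0 | n + 1 => (hp n).1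
    have hpA : ∀ n, p n ∈ A := fun n => (hpAg n).1
    have hpT : ∀ n, |g (p (n + 1)) (T (p n))| = Dg g A B := fun n => (hp n).2
    obtain ⟨q, hq⟩ := hcomp p (hg.gCauchy_of_topProxWeakContraction hβ.le hβ1 hT hpA hpT)
    have hqAg : q ∈ proxA g A B := hAgclosed p hpAg q hq
    exact ⟨q, hqAg,
      hg.abs_self_apply_eq_Dg_of_gConv hT hpA hpT hq hqAg.1 (hTprox hqAg), hq⟩
  refine ⟨?_, hconv⟩
  obtain ⟨p, h0, hp⟩ := exists_proximal_seq hTprox hAg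
  obtain ⟨q, hqAg, hqT, -⟩ := hconv p h0 hp
  exact ⟨q, hqAg, hqT⟩

theorem stmt_3 {X : Type*} [TopologicalSpace X] (g : X → X → ℝ)
    (hg : Continuous (Function.uncurry g))
    (hzero : ∀ x y : X, g x y = 0 ↔ x = y)
    (hsymm : ∀ x y : X, |g x y| = |g y x|)
    (htri : ∀ x y z : X, |g x z| ≤ |g x y| + |g y z|)
    (hcomp : GComplete g)
    (A B : Set X) (hA : A.Nonempty) (hB : B.Nonempty)
    (hAg : (proxA g A B).Nonempty) (hAgclosed : GClosed g (proxA g A B))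
    (T : X → X) (hTAB : Set.MapsTo T A B)
    (β N : ℝ) (hβ : 0 < β) (hβ1 : β < 1) (hN : 0 ≤ N)
    (hT : TopProxWeakContraction g A B T β N)
    (hTprox : Set.MapsTo T (proxA g A B) (proxB g A B)) :
    (∃ p ∈ proxA g A B, |g p (T p)| = Dg g A B) ∧
      ∀ p : ℕ → X, p 0 ∈ proxA g A B →
        (∀ n : ℕ, p (n + 1) ∈ proxA g A B ∧ |g (p (n + 1)) (T (p n))| = Dg g A B) →
        ∃ q ∈ proxA g A B, |g q (T q)| = Dg g A B ∧ GConv g p q :=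
  stmt_3_general g hzero hsymm htri hcomp A B hAg hAgclosed T β N hβ hβ1 hT hTprox
end

section
/- Let X be a g-complete topological space, where g : X × X → ℝ is a continuous function such that for all x, y, z ∈ X: g(x,y) = 0 if and only if x = y, |g(x,y)| = |g(y,x)|, and |g(x,z)| ≤ |g(x,y)| + |g(y,z)|. Let (A, B) be a pair of nonempty subsets of X such that A_g is nonempty and g-closed. Let T : A → B be a topologically proximal weak contraction with respect to g with constants β ∈ (0,1) and N ≥ 0 satisfying 1 − β − N > 0, such that T(A_g) ⊆ B_g. Then T has exactly one best proximity point in A_g. -/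
open Filter Topology

/-! Starting anywhere in `A_g`, the proximal condition `T(A_g) ⊆ B_g` lets one pick
`x (n+1) ∈ A_g` with `|g (x (n+1)) (T (x n))| = D_g(A,B)`. Applying the contraction to two
consecutive steps kills the `N`-term (it is `N * |g (x (n+1)) (x (n+1))| = 0`), so consecutive
`g`-distances decay like `β ^ n`; since `|g|` is a pseudometric, the sequence is `g`-Cauchy. Its
`g`-limit `p` stays in the `g`-closed set `A_g`, and the contraction applied to the sequence and to
a proximal point `u` of `T p` squeezes `|g p u|` to `0`, so `u = p`. For uniqueness, the contraction
applied to two best proximity points `p, q` gives `|g p q| ≤ (β + N) |g p q|`. -/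

section

variable {X : Type*} {g : X → X → ℝ}

abbrev pseudoMetricSpaceOfAbs (hself : ∀ x, g x x = 0) (hsymm : ∀ x y, |g x y| = |g y x|)
    (htri : ∀ x y z, |g x z| ≤ |g x y| + |g y z|) : PseudoMetricSpace X where
  dist x y := |g x y|
  dist_self x := by simp [hself]
  dist_comm := hsymm
  dist_triangle := htri

theorem gCauchy_of_le_geometric (hself : ∀ x, g x x = 0) (hsymm : ∀ x y, |g x y| = |g y x|)
    (htri : ∀ x y z, |g x z| ≤ |g x y| + |g y z|) {x : ℕ → X} {r C : ℝ} (hr : r < 1)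
    (hx : ∀ n, |g (x n) (x (n + 1))| ≤ C * r ^ n) : GCauchy g x := by
  let _ : PseudoMetricSpace X := pseudoMetricSpaceOfAbs hself hsymm htri
  exact Metric.cauchySeq_iff.1 (cauchySeq_of_le_geometric (f := x) r C hr hx)

variable {A B : Set X} {T : X → X}

theorem exists_mem_proxA_abs_eq_Dg (hT : Set.MapsTo T (proxA g A B) (proxB g A B)) {a : X}
    (ha : a ∈ proxA g A B) : ∃ b ∈ proxA g A B, |g b (T a)| = Dg g A B := by
  obtain ⟨hTa, b, hb, hbD⟩ := hT ha
  exact ⟨b, ⟨hb, T a, hTa, hbD⟩, hbD⟩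

theorem exists_proximal_orbit (hT : Set.MapsTo T (proxA g A B) (proxB g A B))
    (hne : (proxA g A B).Nonempty) :
    ∃ x : ℕ → X, ∀ n, x n ∈ proxA g A B ∧ |g (x (n + 1)) (T (x n))| = Dg g A B := by
  obtain ⟨x₀, hx₀⟩ := hne
  choose next hnext using fun a : proxA g A B => exists_mem_proxA_abs_eq_Dg hT a.2
  let step : proxA g A B → proxA g A B := fun a => ⟨next a, (hnext a).1⟩
  refine ⟨fun n => step^[n] ⟨x₀, hx₀⟩, fun n => ⟨(step^[n] _).2, ?_⟩⟩
  simp only [Function.iterate_succ_apply']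
  exact (hnext _).2

namespace TopProxWeakContraction

variable {β N : ℝ} {x : ℕ → X}

theorem abs_succ_le (hT : TopProxWeakContraction g A B T β N) (hself : ∀ x, g x x = 0)
    (hxA : ∀ n, x n ∈ A) (hx : ∀ n, |g (x (n + 1)) (T (x n))| = Dg g A B) (n : ℕ) :
    |g (x (n + 1)) (x (n + 2))| ≤ β * |g (x n) (x (n + 1))| := by
  simpa [hself] using
    hT _ (hxA n) _ (hxA (n + 1)) _ (hxA (n + 1)) _ (hxA (n + 2)) (hx n) (hx (n + 1))

theorem abs_le_geometric (hT : TopProxWeakContraction g A B T β N) (hself : ∀ x, g x x = 0)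
    (hβ : 0 ≤ β) (hxA : ∀ n, x n ∈ A) (hx : ∀ n, |g (x (n + 1)) (T (x n))| = Dg g A B)
    (n : ℕ) : |g (x n) (x (n + 1))| ≤ |g (x 0) (x 1)| * β ^ n := by
  rw [mul_comm]
  exact le_geom (u := fun n => |g (x n) (x (n + 1))|) hβ n
    fun k _ => hT.abs_succ_le hself hxA hx k

theorem eq_of_gConv (hT : TopProxWeakContraction g A B T β N)
    (hsymm : ∀ x y, |g x y| = |g y x|) (htri : ∀ x y z, |g x z| ≤ |g x y| + |g y z|)
    (hsep : ∀ x y, g x y = 0 → x = y) (hxA : ∀ n, x n ∈ A)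
    (hx : ∀ n, |g (x (n + 1)) (T (x n))| = Dg g A B) {p u : X} (hp : GConv g x p)
    (hpA : p ∈ A) (huA : u ∈ A) (hu : |g u (T p)| = Dg g A B) : u = p := by
  have hbound : ∀ n, |g p u| ≤ (1 + N) * |g (x (n + 1)) p| + β * |g (x n) p| := fun n => by
    have h := hT _ (hxA n) _ hpA _ (hxA (n + 1)) _ huA (hx n) hu
    rw [hsymm p] at h
    calc |g p u| ≤ |g p (x (n + 1))| + |g (x (n + 1)) u| := htri _ _ _
      _ ≤ _ := by rw [hsymm p]; linarith
  have hlim : Tendsto (fun n => (1 + N) * |g (x (n + 1)) p| + β * |g (x n) p|) atTop (𝓝 0) := by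
    simpa using ((hp.comp (tendsto_add_atTop_nat 1)).const_mul (1 + N)).add (hp.const_mul β)
  exact (hsep p u (abs_nonpos_iff.1 (ge_of_tendsto' hlim hbound))).symm

theorem eq_of_abs_eq_Dg (hT : TopProxWeakContraction g A B T β N)
    (hsymm : ∀ x y, |g x y| = |g y x|) (hsep : ∀ x y, g x y = 0 → x = y)
    (hβN : 0 < 1 - β - N) {p q : X} (hpA : p ∈ A) (hqA : q ∈ A)
    (hp : |g p (T p)| = Dg g A B) (hq : |g q (T q)| = Dg g A B) : p = q := by
  have h := hT _ hpA _ hqA _ hpA _ hqA hp hq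
  rw [hsymm q] at h
  have hle : |g p q| ≤ 0 := by nlinarith [abs_nonneg (g p q)]
  exact hsep p q (abs_nonpos_iff.1 hle)

end TopProxWeakContraction

end

theorem stmt_4_general {X : Type*} (g : X → X → ℝ)
    (hzero : ∀ x y : X, g x y = 0 ↔ x = y)
    (hsymm : ∀ x y : X, |g x y| = |g y x|)
    (htri : ∀ x y z : X, |g x z| ≤ |g x y| + |g y z|)
    (hcomp : GComplete g)
    (A B : Set X)
    (hAg : (proxA g A B).Nonempty) (hAgclosed : GClosed g (proxA g A B))
    (T : X → X)
    (β N : ℝ) (hβ : 0 < β) (hβ1 : β < 1)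
    (hβN : 0 < 1 - β - N)
    (hT : TopProxWeakContraction g A B T β N)
    (hTprox : Set.MapsTo T (proxA g A B) (proxB g A B)) :
    ∃! p : X, p ∈ proxA g A B ∧ |g p (T p)| = Dg g A B := by
  have hself : ∀ x, g x x = 0 := fun x => (hzero x x).2 rfl
  have hsep : ∀ x y, g x y = 0 → x = y := fun x y => (hzero x y).1
  obtain ⟨x, hx⟩ := exists_proximal_orbit hTprox hAg
  have hxA : ∀ n, x n ∈ A := fun n => (hx n).1.1
  have hxD : ∀ n, |g (x (n + 1)) (T (x n))| = Dg g A B := fun n => (hx n).2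
  obtain ⟨p, hp⟩ := hcomp x <|
    gCauchy_of_le_geometric hself hsymm htri hβ1 (hT.abs_le_geometric hself hβ.le hxA hxD)
  have hpA : p ∈ proxA g A B := hAgclosed x (fun n => (hx n).1) p hp
  obtain ⟨u, huA, hu⟩ := exists_mem_proxA_abs_eq_Dg hTprox hpA
  rw [hT.eq_of_gConv hsymm htri hsep hxA hxD hp hpA.1 huA.1 hu] at hu
  exact ⟨p, ⟨hpA, hu⟩, fun q ⟨hqA, hq⟩ => hT.eq_of_abs_eq_Dg hsymm hsep hβN hqA.1 hpA.1 hq hu⟩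

theorem stmt_4 {X : Type*} [TopologicalSpace X] (g : X → X → ℝ)
    (hg : Continuous (Function.uncurry g))
    (hzero : ∀ x y : X, g x y = 0 ↔ x = y)
    (hsymm : ∀ x y : X, |g x y| = |g y x|)
    (htri : ∀ x y z : X, |g x z| ≤ |g x y| + |g y z|)
    (hcomp : GComplete g)
    (A B : Set X) (hA : A.Nonempty) (hB : B.Nonempty)
    (hAg : (proxA g A B).Nonempty) (hAgclosed : GClosed g (proxA g A B))
    (T : X → X) (hTAB : Set.MapsTo T A B)
    (β N : ℝ) (hβ : 0 < β) (hβ1 : β < 1) (hN : 0 ≤ N)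
    (hβN : 0 < 1 - β - N)
    (hT : TopProxWeakContraction g A B T β N)
    (hTprox : Set.MapsTo T (proxA g A B) (proxB g A B)) :
    ∃! p : X, p ∈ proxA g A B ∧ |g p (T p)| = Dg g A B :=
  stmt_4_general g hzero hsymm htri hcomp A B hAg hAgclosed T β N hβ hβ1 hβN hT hTprox
end

section
/- Let X be a topological space, g : X × X → ℝ a continuous function, and H : X × X × [0,1] → X a topologically convex structure on X with respect to g. Let A and B be nonempty subsets of X such that A is topologically r-starshaped, B is topologically s-starshaped, and |g(r,s)| = D_g(A,B). Then A_g is topologically r-starshaped and B_g is topologically s-starshaped. -/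
open Filter Topology

/-- `H` is a topologically convex structure on `X` with respect to `g`. -/
def TopConvexStructure {X : Type*} [TopologicalSpace X] (g : X → X → ℝ)
    (H : X → X → ℝ → X) : Prop :=
  Continuous (fun p : X × X × ℝ => H p.1 p.2.1 p.2.2) ∧
    (∀ x₀ x y : X, ∀ t ∈ Set.Icc (0 : ℝ) 1,
      |g x₀ (H x y t)| ≤ t * |g x₀ x| + (1 - t) * |g x₀ y|) ∧
    (∀ x x₀ y y₀ : X, ∀ t ∈ Set.Icc (0 : ℝ) 1,
      |g (H x y t) (H x₀ y₀ t)| ≤ t * |g x x₀| + (1 - t) * |g y y₀|)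

/-- A nonempty subset `S` of `X` is topologically `r`-starshaped with respect to `H`. -/
def TopStarshaped {X : Type*} (H : X → X → ℝ → X) (r : X) (S : Set X) : Prop :=
  r ∈ S ∧ ∀ x ∈ S, ∀ t ∈ Set.Icc (0 : ℝ) 1, H r x t ∈ S

/-
Since `|g r s| = D_g(A,B)`, moving both points of a proximal pair `(x, y) ∈ A × B` towards
`(r, s)` with the same parameter `t` keeps `|g|` at most `t D_g + (1 - t) D_g = D_g` by the
second convexity inequality, while starshapedness keeps the new pair in `A × B`, where `|g|` is
at least `D_g`. So `(H r x t, H s y t)` is again a proximal pair.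
-/

section

variable {X : Type*} {g : X → X → ℝ} {A B : Set X}

theorem Dg_le_abs {x y : X} (hx : x ∈ A) (hy : y ∈ B) : Dg g A B ≤ |g x y| :=
  csInf_le ⟨0, by rintro _ ⟨a, -, b, -, rfl⟩; exact abs_nonneg _⟩ ⟨x, hx, y, hy, rfl⟩

variable [TopologicalSpace X] {H : X → X → ℝ → X} {r s : X}

theorem abs_g_H_eq_Dg (hH : TopConvexStructure g H) (hAr : TopStarshaped H r A)
    (hBs : TopStarshaped H s B) (hrs : |g r s| = Dg g A B) {x y : X} (hx : x ∈ A) (hy : y ∈ B)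
    (hxy : |g x y| = Dg g A B) {t : ℝ} (ht : t ∈ Set.Icc (0 : ℝ) 1) :
    |g (H r x t) (H s y t)| = Dg g A B := by
  refine le_antisymm ?_ (Dg_le_abs (hAr.2 x hx t ht) (hBs.2 y hy t ht))
  calc |g (H r x t) (H s y t)| ≤ t * |g r s| + (1 - t) * |g x y| := hH.2.2 r s x y t ht
    _ = Dg g A B := by rw [hrs, hxy]; ring

theorem TopStarshaped.proxA (hH : TopConvexStructure g H) (hAr : TopStarshaped H r A)
    (hBs : TopStarshaped H s B) (hrs : |g r s| = Dg g A B) :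
    TopStarshaped H r (proxA g A B) := by
  refine ⟨⟨hAr.1, s, hBs.1, hrs⟩, ?_⟩
  rintro x ⟨hx, y, hy, hxy⟩ t ht
  exact ⟨hAr.2 x hx t ht, H s y t, hBs.2 y hy t ht, abs_g_H_eq_Dg hH hAr hBs hrs hx hy hxy ht⟩

theorem TopStarshaped.proxB (hH : TopConvexStructure g H) (hAr : TopStarshaped H r A)
    (hBs : TopStarshaped H s B) (hrs : |g r s| = Dg g A B) :
    TopStarshaped H s (proxB g A B) := by
  refine ⟨⟨hBs.1, r, hAr.1, hrs⟩, ?_⟩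
  rintro y ⟨hy, x, hx, hxy⟩ t ht
  exact ⟨hBs.2 y hy t ht, H r x t, hAr.2 x hx t ht, abs_g_H_eq_Dg hH hAr hBs hrs hx hy hxy ht⟩

end

theorem stmt_5_general {X : Type*} [TopologicalSpace X] (g : X → X → ℝ)
    (H : X → X → ℝ → X) (hH : TopConvexStructure g H)
    (A B : Set X)
    (r s : X) (hAr : TopStarshaped H r A) (hBs : TopStarshaped H s B)
    (hrs : |g r s| = Dg g A B) :
    TopStarshaped H r (proxA g A B) ∧ TopStarshaped H s (proxB g A B) :=
  ⟨hAr.proxA hH hBs hrs, hAr.proxB hH hBs hrs⟩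

theorem stmt_5 {X : Type*} [TopologicalSpace X] (g : X → X → ℝ)
    (hg : Continuous (Function.uncurry g))
    (H : X → X → ℝ → X) (hH : TopConvexStructure g H)
    (A B : Set X) (hA : A.Nonempty) (hB : B.Nonempty)
    (r s : X) (hAr : TopStarshaped H r A) (hBs : TopStarshaped H s B)
    (hrs : |g r s| = Dg g A B) :
    TopStarshaped H r (proxA g A B) ∧ TopStarshaped H s (proxB g A B) :=
  stmt_5_general g H hH A B r s hAr hBs hrs
end

section
/- Let g : ℝ² × ℝ² → ℝ be defined by g((x,y),(u,v)) = y − v (with ℝ² carrying the usual topology). Then ℝ² is g-complete, the mapping T : ℝ² → ℝ² defined by T(x,y) = (x, y/2) satisfies |g(T(p), T(q))| = (1/2)|g(p,q)| for all p, q ∈ ℝ² (so T is a topologically Banach contraction with respect to g), and for every x ∈ ℝ the point (x, 0) is a fixed point of T; in particular T has infinitely many fixed points. -/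
open Filter Topology

/-- `g((x,y),(u,v)) = y - v` on `ℝ² × ℝ²`. -/
def g10 : ℝ × ℝ → ℝ × ℝ → ℝ := fun p q => p.2 - q.2

/-- `T(x,y) = (x, y/2)`. -/
noncomputable def T10 : ℝ × ℝ → ℝ × ℝ := fun p => (p.1, p.2 / 2)

section PullbackDist

variable {X Y : Type*} [PseudoMetricSpace Y] {g : X → X → ℝ} {f : X → Y}

theorem gCauchy_iff_cauchySeq (hg : ∀ p q, |g p q| = dist (f p) (f q)) {x : ℕ → X} :
    GCauchy g x ↔ CauchySeq (f ∘ x) := by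
  simp only [GCauchy, Metric.cauchySeq_iff, Function.comp_apply, hg]

theorem gConv_iff_tendsto (hg : ∀ p q, |g p q| = dist (f p) (f q)) {x : ℕ → X} {p : X} :
    GConv g x p ↔ Tendsto (f ∘ x) atTop (𝓝 (f p)) := by
  rw [GConv, tendsto_iff_dist_tendsto_zero (f := f ∘ x)]
  simp only [Function.comp_apply, hg]

theorem gComplete_of_abs_eq_dist [CompleteSpace Y] (hf : f.Surjective)
    (hg : ∀ p q, |g p q| = dist (f p) (f q)) : GComplete g := by
  intro x hx
  obtain ⟨L, hL⟩ := cauchySeq_tendsto_of_complete ((gCauchy_iff_cauchySeq hg).mp hx)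
  obtain ⟨p, rfl⟩ := hf L
  exact ⟨p, (gConv_iff_tendsto hg).mpr hL⟩

end PullbackDist

theorem abs_g10 (p q : ℝ × ℝ) : |g10 p q| = dist p.2 q.2 :=
  (Real.dist_eq _ _).symm

theorem abs_g10_T10 (p q : ℝ × ℝ) : |g10 (T10 p) (T10 q)| = (1 / 2) * |g10 p q| := by
  simp only [g10, T10, ← sub_div, abs_div, abs_two]
  ring

theorem T10_mk_zero (x : ℝ) : T10 (x, 0) = (x, 0) := by
  simp [T10]

theorem stmt_10 :
    GComplete g10 ∧
    (∀ p q : ℝ × ℝ, |g10 (T10 p) (T10 q)| = (1 / 2) * |g10 p q|) ∧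
    (∃ α : ℝ, 0 < α ∧ α < 1 ∧ ∀ p q : ℝ × ℝ, |g10 (T10 p) (T10 q)| ≤ α * |g10 p q|) ∧
    (∀ x : ℝ, T10 (x, 0) = (x, 0)) ∧
    {p : ℝ × ℝ | T10 p = p}.Infinite := by
  refine ⟨gComplete_of_abs_eq_dist Prod.snd_surjective abs_g10, abs_g10_T10,
    ⟨1 / 2, by norm_num, by norm_num, fun p q => (abs_g10_T10 p q).le⟩, T10_mk_zero, ?_⟩
  exact Set.infinite_of_injective_forall_mem (Prod.mk_left_injective (0 : ℝ)) T10_mk_zero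
end
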